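/- arXiv:1606.02489 — 2 statements merged into one kernel-verified Lean document; each statement's English description precedes it below -/
import Mathlib

section
/- Refined Kato inequality for harmonic functions: if φ is a harmonic function on an n-dimensional Riemannian manifold (or an open subset of ℝⁿ), then at every point where ∇φ ≠ 0 one has |∇²φ|² ≥ (n/(n-1))·|∇|∇φ||². -/
open Real RealInnerProductSpace

private lemma kato_algebra (n : ℕ) (hn : 2 ≤ n) (a : Fin n → Fin n → ℝ) (ν : Fin n → ℝ)
    (hsymm : ∀ i j, a i j = a j i) (htr : ∑ i, a i i = 0) (hunit : ∑ i, ν i ^ 2 = 1) :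
    ((n : ℝ) / ((n : ℝ) - 1)) * ∑ i, (∑ j, a i j * ν j) ^ 2 ≤ ∑ i, ∑ j, a i j ^ 2 := by
  have hm : (1:ℝ) ≤ (n:ℝ) - 1 := by
    have : (2:ℝ) ≤ (n:ℝ) := by exact_mod_cast hn
    linarith
  have hm0 : ((n:ℝ) - 1) ≠ 0 := by linarith
  have hunit' : ∑ i, ν i * ν i = 1 := by simpa [sq] using hunit
  set v : Fin n → ℝ := fun i => ∑ j, a i j * ν j with hvdef
  set t : ℝ := ∑ i, v i * ν i with htdef
  set w : Fin n → ℝ := fun i => v i - t * ν i with hwdef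
  set c : ℝ := (n : ℝ) * t / ((n:ℝ) - 1) with hcdef
  set d : ℝ := t / ((n:ℝ) - 1) with hddef
  set s : Fin n → Fin n → ℝ :=
    fun i j => ν i * w j + w i * ν j + c * (ν i * ν j) - (if i = j then d else 0) with hsdef
  have hwsplit : ∀ i, v i = t * ν i + w i := by
    intro i; simp only [hwdef]; ring
  have hwn : ∑ i, w i * ν i = 0 := by
    simp only [hwdef, sub_mul, Finset.sum_sub_distrib, mul_assoc, ← Finset.mul_sum, ← htdef]
    rw [hunit']; ring
  have hnw : ∑ i, ν i * w i = 0 := by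
    rw [← hwn]; exact Finset.sum_congr rfl fun i _ => mul_comm _ _
  have hcol : ∀ j, ∑ i, a i j * ν i = v j := fun j =>
    Finset.sum_congr rfl (fun i _ => by rw [hsymm i j]) |>.trans rfl
  have hvw : ∑ i, v i * w i = ∑ i, w i ^ 2 := by
    have h1 : ∀ i, v i * w i = t * (ν i * w i) + w i ^ 2 := by
      intro i; rw [hwsplit i]; ring
    simp only [h1, Finset.sum_add_distrib, ← Finset.mul_sum, hnw]
    ring
  have hv2 : ∑ i, v i ^ 2 = t ^ 2 + ∑ i, w i ^ 2 := by
    have h1 : ∀ i, v i ^ 2 = t * (v i * ν i) + v i * w i := by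
      intro i; rw [hwsplit i]; simp only [hwdef]; ring
    simp only [h1, Finset.sum_add_distrib, ← Finset.mul_sum, ← htdef, hvw]
    ring
  have hsep : ∀ (f g : Fin n → ℝ), ∑ i, ∑ j, f i * g j = (∑ i, f i) * (∑ j, g j) :=
    fun f g => by rw [Finset.sum_mul_sum]
  have hAS : ∑ i, ∑ j, a i j * s i j = 2 * (∑ i, w i ^ 2) + c * t := by
    have hterm : ∀ i j : Fin n, a i j * s i j =
        a i j * (ν i * w j) + a i j * (w i * ν j) + c * (a i j * (ν i * ν j))
          - (if i = j then d * a i j else 0) := by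
      intro i j
      simp only [hsdef]
      split_ifs <;> ring
    simp only [hterm, Finset.sum_add_distrib, Finset.sum_sub_distrib]
    have e1 : ∑ i, ∑ j, a i j * (ν i * w j) = ∑ i, w i ^ 2 := by
      rw [Finset.sum_comm, ← hvw]
      refine Finset.sum_congr rfl fun j _ => ?_
      rw [show ∑ i, a i j * (ν i * w j) = (∑ i, a i j * ν i) * w j by
        rw [Finset.sum_mul]; exact Finset.sum_congr rfl fun i _ => by ring]
      rw [hcol j]
    have e2 : ∑ i, ∑ j, a i j * (w i * ν j) = ∑ i, w i ^ 2 := by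
      rw [← hvw]
      refine Finset.sum_congr rfl fun i _ => ?_
      rw [show ∑ j, a i j * (w i * ν j) = w i * ∑ j, a i j * ν j by
        rw [Finset.mul_sum]; exact Finset.sum_congr rfl fun j _ => by ring]
      exact mul_comm _ _
    have e3 : ∑ i, ∑ j, c * (a i j * (ν i * ν j)) = c * t := by
      have h1 : ∀ i : Fin n, ∑ j, c * (a i j * (ν i * ν j)) = c * (v i * ν i) := by
        intro i
        rw [show ∑ j, c * (a i j * (ν i * ν j)) = ∑ j, (c * ν i) * (a i j * ν j) from
          Finset.sum_congr rfl fun j _ => by ring, ← Finset.mul_sum]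
        show (c * ν i) * v i = c * (v i * ν i)
        ring
      simp only [h1, ← Finset.mul_sum, ← htdef]
    have e4 : ∑ i : Fin n, ∑ j, (if i = j then d * a i j else 0) = 0 := by
      simp only [Finset.sum_ite_eq, Finset.mem_univ, if_true]
      rw [← Finset.mul_sum, htr, mul_zero]
    rw [e1, e2, e3, e4]
    ring
  have hS2 : ∑ i, ∑ j, s i j ^ 2
      = 2 * (∑ i, w i ^ 2) + c ^ 2 + (n : ℝ) * d ^ 2 - 2 * c * d := by
    have hterm2 : ∀ i j : Fin n, s i j ^ 2 =
        (ν i ^ 2) * (w j ^ 2) + (w i ^ 2) * (ν j ^ 2) + (c ^ 2 * ν i ^ 2) * (ν j ^ 2)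
        + (if i = j then d ^ 2 else 0)
        + (2 * (ν i * w i)) * (w j * ν j) + (2 * c * ν i ^ 2) * (w j * ν j)
        + (2 * c * (w i * ν i)) * (ν j ^ 2)
        - (if i = j then 2 * d * (ν i * w j) else 0)
        - (if i = j then 2 * d * (w i * ν j) else 0)
        - (if i = j then 2 * c * d * (ν i * ν j) else 0) := by
      intro i j
      simp only [hsdef]
      split_ifs <;> ring
    simp only [hterm2, Finset.sum_add_distrib, Finset.sum_sub_distrib]
    rw [hsep (fun i => ν i ^ 2) (fun j => w j ^ 2),
      hsep (fun i => w i ^ 2) (fun j => ν j ^ 2),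
      hsep (fun i => c ^ 2 * ν i ^ 2) (fun j => ν j ^ 2),
      hsep (fun i => 2 * (ν i * w i)) (fun j => w j * ν j),
      hsep (fun i => 2 * c * ν i ^ 2) (fun j => w j * ν j),
      hsep (fun i => 2 * c * (w i * ν i)) (fun j => ν j ^ 2)]
    simp only [Finset.sum_ite_eq, Finset.mem_univ, if_true]
    rw [show (∑ _i : Fin n, d ^ 2) = (n : ℝ) * d ^ 2 by simp [mul_comm]]
    simp only [← Finset.mul_sum]
    rw [hunit, hwn, hnw, hunit']
    ring
  have key : (0:ℝ) ≤ ∑ i, ∑ j, (a i j - s i j) ^ 2 :=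
    Finset.sum_nonneg fun i _ => Finset.sum_nonneg fun j _ => sq_nonneg _
  have hexp : ∑ i, ∑ j, (a i j - s i j) ^ 2
      = ∑ i, ∑ j, a i j ^ 2 - 2 * (∑ i, ∑ j, a i j * s i j) + ∑ i, ∑ j, s i j ^ 2 := by
    simp only [sub_sq, mul_assoc, Finset.sum_add_distrib, Finset.sum_sub_distrib,
      ← Finset.mul_sum]
  have hW0 : (0:ℝ) ≤ ∑ i, w i ^ 2 := Finset.sum_nonneg fun i _ => sq_nonneg _
  have hk2 : (n : ℝ) / ((n:ℝ) - 1) ≤ 2 := by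
    rw [div_le_iff₀ (by linarith)]
    have : (2:ℝ) ≤ (n:ℝ) := by exact_mod_cast hn
    linarith
  have hid : 2 * c * t - c ^ 2 - (n:ℝ) * d ^ 2 + 2 * c * d
      = ((n:ℝ) / ((n:ℝ) - 1)) * t ^ 2 := by
    rw [hcdef, hddef]
    field_simp
    ring
  have hbound : 2 * (∑ i, w i ^ 2) + ((n:ℝ) / ((n:ℝ) - 1)) * t ^ 2
      ≤ ∑ i, ∑ j, a i j ^ 2 := by
    have := hexp ▸ key
    linarith [this, hAS, hS2, hid]
  rw [hv2, mul_add]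
  have : ((n:ℝ) / ((n:ℝ) - 1)) * (∑ i, w i ^ 2) ≤ 2 * (∑ i, w i ^ 2) :=
    mul_le_mul_of_nonneg_right hk2 hW0
  linarith

/-- refined Kato inequality for harmonic functions: if `φ` is smooth and
harmonic on an open set of `ℝⁿ`, then at every point where `∇φ ≠ 0` one has
`|∇²φ|² ≥ (n/(n-1)) |∇|∇φ||²`, where `|∇²φ|` is the Hilbert–Schmidt norm of the Hessian. -/
theorem refined_kato_harmonic (n : ℕ) (hn : 2 ≤ n)
    (Ω : Set (EuclideanSpace ℝ (Fin n))) (hΩ : IsOpen Ω)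
    (φ : EuclideanSpace ℝ (Fin n) → ℝ) (hφ : ContDiffOn ℝ (⊤ : ℕ∞) φ Ω)
    (hharm : ∀ x ∈ Ω,
      ∑ i, ⟪fderiv ℝ (gradient φ) x (EuclideanSpace.basisFun (Fin n) ℝ i),
            (EuclideanSpace.basisFun (Fin n) ℝ i : EuclideanSpace ℝ (Fin n))⟫ = 0)
    (x : EuclideanSpace ℝ (Fin n)) (hx : x ∈ Ω) (hgrad : gradient φ x ≠ 0) :
    ((n : ℝ) / ((n : ℝ) - 1)) * ‖gradient (fun y => ‖gradient φ y‖) x‖ ^ (2 : ℕ)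
      ≤ ∑ i, ∑ j, ⟪fderiv ℝ (gradient φ) x (EuclideanSpace.basisFun (Fin n) ℝ i),
            (EuclideanSpace.basisFun (Fin n) ℝ j : EuclideanSpace ℝ (Fin n))⟫ ^ (2 : ℕ) := by
  classical
  have hφx : ContDiffAt ℝ (⊤ : ℕ∞) φ x := hφ.contDiffAt (hΩ.mem_nhds hx)
  have hf' : ContDiffAt ℝ 1 (fderiv ℝ φ) x := hφx.fderiv_right (WithTop.coe_le_coe.2 le_top)
  have hd : DifferentiableAt ℝ (fderiv ℝ φ) x := hf'.differentiableAt one_ne_zero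
  set f'' := fderiv ℝ (fderiv ℝ φ) x with hf''def
  set iso : StrongDual ℝ (EuclideanSpace ℝ (Fin n)) ≃ₗᵢ[ℝ] EuclideanSpace ℝ (Fin n) :=
    (InnerProductSpace.toDual ℝ _).symm with hisodef
  have hgdef : gradient φ = ⇑iso ∘ (fderiv ℝ φ) := rfl
  have hB : HasFDerivAt (gradient φ)
      ((iso : StrongDual ℝ (EuclideanSpace ℝ (Fin n)) →L[ℝ]
        EuclideanSpace ℝ (Fin n)).comp f'') x := by
    rw [hgdef]
    exact (iso.comp_hasFDerivAt_iff).2 hd.hasFDerivAt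
  set g := gradient φ with hg
  set Bc := fderiv ℝ (gradient φ) x with hBc
  have hBeq : Bc = (iso : StrongDual ℝ (EuclideanSpace ℝ (Fin n)) →L[ℝ]
      EuclideanSpace ℝ (Fin n)).comp f'' := hB.fderiv
  rw [← hBeq] at hB
  set e : Fin n → EuclideanSpace ℝ (Fin n) := fun i => EuclideanSpace.basisFun (Fin n) ℝ i with he
  -- Hessian components and symmetry
  have hinner_iso : ∀ (ℓ : StrongDual ℝ (EuclideanSpace ℝ (Fin n)))
      (v : EuclideanSpace ℝ (Fin n)), ⟪iso ℓ, v⟫ = ℓ v := fun ℓ v =>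
    InnerProductSpace.toDual_symm_apply
  have ha : ∀ u v : EuclideanSpace ℝ (Fin n), ⟪Bc u, v⟫ = f'' u v := by
    intro u v
    rw [hBeq]
    exact hinner_iso (f'' u) v
  have hsymmf : ∀ u v, f'' u v = f'' v u := hφx.isSymmSndFDerivAt (by rw [minSmoothness_of_isRCLikeNormedField]; exact WithTop.coe_le_coe.2 le_top)
  -- coordinate facts
  have hcoord : ∀ (u : EuclideanSpace ℝ (Fin n)) (i : Fin n), ⟪u, e i⟫ = u i := by
    intro u i
    rw [he]
    simp [EuclideanSpace.basisFun_apply, EuclideanSpace.inner_single_right]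
  have hinner_sum : ∀ u v : EuclideanSpace ℝ (Fin n), ⟪u, v⟫ = ∑ i, u i * v i := by
    intro u v
    rw [PiLp.inner_apply]
    simp [RCLike.inner_apply, mul_comm]
  have hnorm_sq : ∀ u : EuclideanSpace ℝ (Fin n), ‖u‖ ^ (2:ℕ) = ∑ i, (u i) ^ 2 := by
    intro u
    rw [EuclideanSpace.norm_eq, Real.sq_sqrt (by positivity)]
    simp [sq_abs]
  -- gradient of the norm of the gradient
  have hgx0 : ‖g x‖ ≠ 0 := norm_ne_zero_iff.2 hgrad
  have hq0 : ⟪g x, g x⟫ ≠ 0 := by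
    rw [real_inner_self_eq_norm_sq]; exact pow_ne_zero 2 hgx0
  have hq : HasFDerivAt (fun y => ⟪g y, g y⟫)
      ((fderivInnerCLM ℝ (g x, g x)).comp (Bc.prod Bc)) x := hB.inner ℝ hB
  have hsq : HasFDerivAt (fun y => ‖g y‖)
      ((1 / (2 * Real.sqrt ⟪g x, g x⟫)) •
        ((fderivInnerCLM ℝ (g x, g x)).comp (Bc.prod Bc))) x := by
    have h1 := (Real.hasDerivAt_sqrt hq0).comp_hasFDerivAt x hq
    have hfun : (fun y => Real.sqrt ⟪g y, g y⟫) = fun y => ‖g y‖ := by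
      funext y; rw [real_inner_self_eq_norm_sq, Real.sqrt_sq (norm_nonneg _)]
    rw [← hfun]
    exact h1
  have hu : gradient (fun y => ‖g y‖) x
      = (InnerProductSpace.toDual ℝ _).symm
          ((1 / (2 * Real.sqrt ⟪g x, g x⟫)) •
            ((fderivInnerCLM ℝ (g x, g x)).comp (Bc.prod Bc))) :=
    hsq.hasGradientAt.gradient
  have hcomp : ∀ i : Fin n,
      (gradient (fun y => ‖g y‖) x) i = ⟪g x, Bc (e i)⟫ / ‖g x‖ := by
    intro i
    rw [← hcoord (gradient (fun y => ‖g y‖) x) i, hu, InnerProductSpace.toDual_symm_apply]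
    have hsqrt : Real.sqrt ⟪g x, g x⟫ = ‖g x‖ := by
      rw [real_inner_self_eq_norm_sq, Real.sqrt_sq (norm_nonneg _)]
    simp only [ContinuousLinearMap.smul_apply, ContinuousLinearMap.comp_apply,
      ContinuousLinearMap.prod_apply, fderivInnerCLM_apply, hsqrt, smul_eq_mul]
    rw [real_inner_comm (Bc _) (g x)]
    field_simp
    ring
  -- apply the algebraic lemma
  set a : Fin n → Fin n → ℝ := fun i j => ⟪Bc (e i), e j⟫ with hadef
  set ν : Fin n → ℝ := fun j => g x j / ‖g x‖ with hνdef
  have hsymm : ∀ i j, a i j = a j i := by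
    intro i j; rw [hadef]; simp only [ha]; exact hsymmf _ _
  have htr : ∑ i, a i i = 0 := hharm x hx
  have hunit : ∑ j, ν j ^ 2 = 1 := by
    have : ∑ j, (g x j) ^ 2 = ‖g x‖ ^ (2:ℕ) := (hnorm_sq (g x)).symm
    simp only [hνdef, div_pow]
    rw [← Finset.sum_div, this]
    field_simp
  have hrow : ∀ i, (gradient (fun y => ‖g y‖) x) i = ∑ j, a i j * ν j := by
    intro i
    rw [hcomp i, hinner_sum (g x) (Bc (e i))]
    rw [Finset.sum_div]
    refine Finset.sum_congr rfl fun j _ => ?_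
    rw [hadef, hνdef]
    simp only
    rw [hcoord (Bc (e i)) j]
    field_simp
  calc ((n : ℝ) / ((n : ℝ) - 1)) * ‖gradient (fun y => ‖g y‖) x‖ ^ (2:ℕ)
      = ((n : ℝ) / ((n : ℝ) - 1)) * ∑ i, (∑ j, a i j * ν j) ^ 2 := by
        rw [hnorm_sq]
        congr 1
        exact Finset.sum_congr rfl fun i _ => by rw [hrow i]
    _ ≤ ∑ i, ∑ j, a i j ^ 2 := kato_algebra n hn a ν hsymm htr hunit
end

section
/- From the monotonicity U_p(t) ≥ lim_{τ→0⁺} U_p(τ) = Cap(Ω)^p (n-2)^p |𝕊^{n-1}| and the L^p bound ‖D(log u)/(n-2)‖_{L^p({u=t})} ≤ ‖H/(n-1)‖_{L^p({u=t})}, deduce for t = 1 the geometric inequality (|𝕊^{n-1}|/|∂Ω|)^{1/p} ≤ Cap(Ω)^{(p-(n-1))/(p(n-2))} · ( ⨍_{∂Ω} |H/(n-1)|^p dσ )^{1/p}, for every p ≥ 2 - 1/(n-1). -/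
open Real

/-!
Write `k = n - 2` and `e = (p - (n - 1)) / (p k)`. The monotonicity exponent splits as
`(p - 1)(n - 1)/k = p e + p`, so after cancelling `c ^ p` the monotonicity bound reads
`(k S^{1/p})^p ≤ (c^e IP^{1/p})^p`. Taking `p`-th roots and inserting the `L^p` bound
`IP^{1/p} ≤ k IH^{1/p}` gives `S^{1/p} ≤ c^e IH^{1/p}`; dividing by `A^{1/p}` is the claim.
-/

lemma one_le_of_two_sub_one_div_le {m p : ℝ} (hm : 2 ≤ m) (hp : 2 - 1 / (m - 1) ≤ p) :
    1 ≤ p := by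
  have : 1 / (m - 1) ≤ 1 := by rw [div_le_one (by linarith)]; linarith
  linarith

lemma capacity_exponent_eq {n p : ℝ} (hp : p ≠ 0) (hn : n - 2 ≠ 0) :
    (p - 1) * (n - 1) / (n - 2) = p * ((p - (n - 1)) / (p * (n - 2))) + p := by
  field_simp
  ring

lemma mul_rpow_one_div_le_of_rpow_mul_le {p k c e S I : ℝ} (hp : 0 < p) (hk : 0 ≤ k)
    (hc : 0 < c) (hS : 0 ≤ S) (h : c ^ p * k ^ p * S ≤ c ^ (p * e + p) * I) :
    k * S ^ (1 / p) ≤ c ^ e * I ^ (1 / p) := by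
  have hcp : 0 < c ^ p := rpow_pos_of_pos hc p
  have hce : 0 < c ^ (p * e) := rpow_pos_of_pos hc _
  rw [rpow_add hc, mul_assoc, mul_comm (c ^ (p * e)), mul_assoc] at h
  have hpow : k ^ p * S ≤ c ^ (p * e) * I := le_of_mul_le_mul_left h hcp
  have hI : 0 ≤ I := nonneg_of_mul_nonneg_right ((by positivity : 0 ≤ k ^ p * S).trans hpow) hce
  have hroot {x y : ℝ} (hx : 0 ≤ x) (hy : 0 ≤ y) : (x * y ^ (1 / p)) ^ p = x ^ p * y := by
    rw [mul_rpow hx (by positivity), ← rpow_mul hy, one_div_mul_cancel hp.ne', rpow_one]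
  rw [← rpow_le_rpow_iff (by positivity) (by positivity) hp, hroot hk hS,
    hroot (rpow_nonneg hc.le e) hI, ← rpow_mul hc.le, mul_comm e]
  exact hpow

/-- Here `S = |𝕊^{n-1}|`, `A = |∂Ω|`, `c = Cap(Ω)`, `IP = ∫_{∂Ω} |Du|^p dσ` and
`IH = ∫_{∂Ω} |H/(n-1)|^p dσ`. -/
theorem capacity_lp_geometric_general (n : ℕ) (hn : 3 ≤ n) (p : ℝ)
    (hp : 2 - 1 / ((n : ℝ) - 1) ≤ p)
    (S A c IP IH : ℝ) (hS : 0 < S) (hA : 0 < A) (hc : 0 < c)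
    (hIH : 0 ≤ IH)
    (hmono : c ^ p * ((n : ℝ) - 2) ^ p * S ≤ c ^ ((p - 1) * ((n : ℝ) - 1) / ((n : ℝ) - 2)) * IP)
    (hlp : IP ^ (1 / p) / ((n : ℝ) - 2) ≤ IH ^ (1 / p)) :
    (S / A) ^ (1 / p) ≤ c ^ ((p - ((n : ℝ) - 1)) / (p * ((n : ℝ) - 2))) * (IH / A) ^ (1 / p) := by
  have hk : 0 < (n : ℝ) - 2 := by
    have : (3 : ℝ) ≤ n := by exact_mod_cast hn
    linarith
  have hp0 : 0 < p := zero_lt_one.trans_le (one_le_of_two_sub_one_div_le (by linarith) hp)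
  set e := (p - ((n : ℝ) - 1)) / (p * ((n : ℝ) - 2))
  rw [capacity_exponent_eq hp0.ne' hk.ne'] at hmono
  have hroot := mul_rpow_one_div_le_of_rpow_mul_le hp0 hk.le hc hS.le hmono
  rw [div_le_iff₀ hk] at hlp
  have hSI : S ^ (1 / p) ≤ c ^ e * IH ^ (1 / p) := by
    refine le_of_mul_le_mul_left ?_ hk
    calc (n - 2 : ℝ) * S ^ (1 / p) ≤ c ^ e * IP ^ (1 / p) := hroot
      _ ≤ c ^ e * (IH ^ (1 / p) * (n - 2)) := by gcongr
      _ = (n - 2) * (c ^ e * IH ^ (1 / p)) := by ring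
  have hA' : 0 < A ^ (1 / p) := rpow_pos_of_pos hA _
  rw [div_rpow hS.le hA.le, div_rpow hIH hA.le, mul_div_assoc', div_le_div_iff_of_pos_right hA']
  exact hSI

/-- let `S = |𝕊^{n-1}|`, `A = |∂Ω|`, `c = Cap(Ω)`,
`IP = ∫_{∂Ω} |Du|^p dσ` and `IH = ∫_{∂Ω} |H/(n-1)|^p dσ` (so that `IH/A` is the average
`⨍_{∂Ω} |H/(n-1)|^p dσ`).  From the monotonicity bound at `t = 1`,
`Cap^p (n-2)^p S ≤ Cap^{(p-1)(n-1)/(n-2)} IP` (i.e. `U_p(1) ≥ lim_{τ→0⁺} U_p(τ)`),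
and from the `L^p` bound `IP^{1/p}/(n-2) ≤ IH^{1/p}` (using `|Du| = |D log u|` on `∂Ω`),
one deduces `(S/A)^{1/p} ≤ Cap^{(p-(n-1))/(p(n-2))} (IH/A)^{1/p}`, for every
`p ≥ 2 - 1/(n-1)`. -/
theorem capacity_lp_geometric (n : ℕ) (hn : 3 ≤ n) (p : ℝ)
    (hp : 2 - 1 / ((n : ℝ) - 1) ≤ p)
    (S A c IP IH : ℝ) (hS : 0 < S) (hA : 0 < A) (hc : 0 < c)
    (hIP : 0 ≤ IP) (hIH : 0 ≤ IH)
    (hmono : c ^ p * ((n : ℝ) - 2) ^ p * S ≤ c ^ ((p - 1) * ((n : ℝ) - 1) / ((n : ℝ) - 2)) * IP)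
    (hlp : IP ^ (1 / p) / ((n : ℝ) - 2) ≤ IH ^ (1 / p)) :
    (S / A) ^ (1 / p) ≤ c ^ ((p - ((n : ℝ) - 1)) / (p * ((n : ℝ) - 2))) * (IH / A) ^ (1 / p) :=
  capacity_lp_geometric_general n hn p hp S A c IP IH hS hA hc hIH hmono hlp
end
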